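/- Quotient time separation. Let (X, ℓ) be a Lorentzian pre-length space and define the relation x ∼ y iff ℓ(x,z) = ℓ(y,z) and ℓ(z,x) = ℓ(z,y) for all z ∈ X. Then: ∼ is an equivalence relation on X; the function ℓ^∼([x],[y]) := ℓ(x,y) is well-defined on the quotient X/∼; the quotient X/∼, equipped with the quotient topology and ℓ^∼, is a Lorentzian pre-length space (in particular the quotient topology is finer than the chronological topology of ℓ^∼); and (X/∼, ℓ^∼) satisfies the point distinction property. -/

import Mathlib

open Filter Topology Set

set_option linter.unusedVariables false

universe u v w

noncomputable section

/-- The time separation function `τ = max(0, ℓ)`. -/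
def lorTau {X : Type u} (ℓ : X → X → EReal) (x y : X) : EReal := max 0 (ℓ x y)

/-- The chronological relation `x ≪ y`. -/
def chron {X : Type u} (ℓ : X → X → EReal) (x y : X) : Prop := 0 < ℓ x y

/-- The causal relation `x ≤ y`. -/
def causal {X : Type u} (ℓ : X → X → EReal) (x y : X) : Prop := 0 ≤ ℓ x y

/-- The causal diamond `J(p,q)`. -/
def diamondJ {X : Type u} (ℓ : X → X → EReal) (p q : X) : Set X :=
  {z | causal ℓ p z ∧ causal ℓ z q}

/-- The chronological diamond `I(p,q)`. -/
def diamondI {X : Type u} (ℓ : X → X → EReal) (p q : X) : Set X :=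
  {z | chron ℓ p z ∧ chron ℓ z q}

/-- A Lorentzian pre-length space structure on a topological space `(X, tX)`:
`ℓ` takes values in `{−∞} ∪ [0,∞]`, satisfies the reverse triangle inequality (with the
convention `−∞ + ∞ = ∞ + (−∞) = −∞`, which is definitional for `EReal`), `ℓ(x,x) ≥ 0`,
and the topology is finer than the chronological one. -/
structure IsLPLS {X : Type u} (tX : TopologicalSpace X) (ℓ : X → X → EReal) : Prop where
  bot_or_nonneg : ∀ x y, ℓ x y = ⊥ ∨ 0 ≤ ℓ x y
  revTriangle : ∀ x y z, ℓ x y + ℓ y z ≤ ℓ x z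
  refl_nonneg : ∀ x, 0 ≤ ℓ x x
  open_Iplus : ∀ x, @IsOpen X tX {y | chron ℓ x y}
  open_Iminus : ∀ x, @IsOpen X tX {y | chron ℓ y x}

/-- Forward completeness: every monotone increasing and bounded sequence converges. -/
def ForwardComplete {X : Type u} (tX : TopologicalSpace X) (ℓ : X → X → EReal) : Prop :=
  ∀ (x : ℕ → X) (xhat : X), (∀ k, causal ℓ (x k) (x (k + 1))) → (∀ k, causal ℓ (x k) xhat) →
    ∃ y, Tendsto x atTop (@nhds X tX y)

/-- `(Y, tY, ρ)` together with the map `ι : X → Y` is a forward completion of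
`(X, tX, ℓ)`: it is a forward complete Lorentzian pre-length space, all causal futures
and pasts are closed, `ι` is `ℓ`-preserving and `X` is forward dense in `Y`. -/
structure IsForwardCompletion {X : Type u} (tX : TopologicalSpace X) (ℓ : X → X → EReal)
    {Y : Type v} (tY : TopologicalSpace Y) (ρ : Y → Y → EReal) (ι : X → Y) : Prop where
  lpls : IsLPLS tY ρ
  fwdComplete : ForwardComplete tY ρ
  closed_Jplus : ∀ y : Y, @IsClosed Y tY {z | causal ρ y z}
  closed_Jminus : ∀ y : Y, @IsClosed Y tY {z | causal ρ z y}
  isometric : ∀ x x' : X, ρ (ι x) (ι x') = ℓ x x'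
  fwdDense : ∀ y : Y, ∃ u : ℕ → X,
    (∀ k, causal ρ (ι (u k)) (ι (u (k + 1)))) ∧ (∀ k, causal ρ (ι (u k)) y) ∧
    Tendsto (fun k => ι (u k)) atTop (@nhds Y tY y)


/-- The relation identifying points with the same time separations from all other
points. -/
def lorSetoid {X : Type u} (ℓ : X → X → EReal) : Setoid X where
  r x y := ∀ z, ℓ x z = ℓ y z ∧ ℓ z x = ℓ z y
  iseqv := ⟨fun _ _ => ⟨rfl, rfl⟩,
    fun h z => ⟨(h z).1.symm, (h z).2.symm⟩,
    fun h1 h2 z => ⟨(h1 z).1.trans (h2 z).1, (h1 z).2.trans (h2 z).2⟩⟩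

/-- The quotient time separation function on `X/∼`. -/
def lorQuotSep {X : Type u} (ℓ : X → X → EReal) :
    Quotient (lorSetoid ℓ) → Quotient (lorSetoid ℓ) → EReal :=
  Quotient.lift₂ ℓ fun a₁ b₁ a₂ b₂ ha hb =>
    ((ha b₁).1).trans ((hb a₂).2)

/-- The quotient topology on `X/∼`. -/
def lorQuotTop {X : Type u} (tX : TopologicalSpace X) (ℓ : X → X → EReal) :
    TopologicalSpace (Quotient (lorSetoid ℓ)) :=
  TopologicalSpace.coinduced (Quotient.mk (lorSetoid ℓ)) tX

def PointDistinguishing {Y R : Type*} (ρ : Y → Y → R) : Prop :=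
  ∀ a b : Y, a ≠ b → ∃ c, ρ a c ≠ ρ b c ∨ ρ c a ≠ ρ c b

section Quotient

variable {X : Type u} {ℓ : X → X → EReal}

theorem isOpen_lorQuotTop_iff (tX : TopologicalSpace X) {s : Set (Quotient (lorSetoid ℓ))} :
    IsOpen[lorQuotTop tX ℓ] s ↔ IsOpen[tX] (Quotient.mk _ ⁻¹' s) :=
  isOpen_coinduced

theorem IsLPLS.quotient {tX : TopologicalSpace X} (h : IsLPLS tX ℓ) :
    IsLPLS (lorQuotTop tX ℓ) (lorQuotSep ℓ) where
  bot_or_nonneg a b := Quotient.inductionOn₂ a b h.bot_or_nonneg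
  revTriangle a b c := Quotient.inductionOn₃ a b c h.revTriangle
  refl_nonneg a := Quotient.inductionOn a h.refl_nonneg
  open_Iplus a := Quotient.inductionOn a fun x => (isOpen_lorQuotTop_iff tX).2 (h.open_Iplus x)
  open_Iminus a := Quotient.inductionOn a fun x => (isOpen_lorQuotTop_iff tX).2 (h.open_Iminus x)

variable (ℓ) in
theorem pointDistinguishing_lorQuotSep : PointDistinguishing (lorQuotSep ℓ) := by
  refine fun a b => Quotient.inductionOn₂ a b fun x y hxy => ?_
  obtain ⟨z, hz⟩ : ∃ z, ¬(ℓ x z = ℓ y z ∧ ℓ z x = ℓ z y) :=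
    not_forall.mp fun hr => hxy (Quotient.sound hr)
  exact ⟨⟦z⟧, not_and_or.mp hz⟩

end Quotient

/-- **Quotient time separation** (Proposition 5.2).
For a Lorentzian pre-length space `(X, ℓ)`, the relation `x ∼ y ↔ ∀ z, ℓ(x,z) = ℓ(y,z)
∧ ℓ(z,x) = ℓ(z,y)` is an equivalence relation, the quotient time separation
`ℓ^∼([x],[y]) := ℓ(x,y)` is well-defined, the quotient `X/∼` with the quotient topology
and `ℓ^∼` is a Lorentzian pre-length space, and it satisfies the point distinction
property. -/
theorem quotient_time_separation {X : Type u} (tX : TopologicalSpace X)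
    (ℓ : X → X → EReal) (h : IsLPLS tX ℓ) :
    -- `∼` is an equivalence relation
    Equivalence (fun x y : X => ∀ z, ℓ x z = ℓ y z ∧ ℓ z x = ℓ z y) ∧
    -- the quotient time separation is well-defined
    (∀ x x' y y' : X, (∀ z, ℓ x z = ℓ x' z ∧ ℓ z x = ℓ z x') →
      (∀ z, ℓ y z = ℓ y' z ∧ ℓ z y = ℓ z y') → ℓ x y = ℓ x' y') ∧
    -- the quotient with the quotient topology is a Lorentzian pre-length space
    IsLPLS (lorQuotTop tX ℓ) (lorQuotSep ℓ) ∧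
    -- the quotient satisfies the point distinction property
    (∀ a b : Quotient (lorSetoid ℓ), a ≠ b →
      ∃ c, lorQuotSep ℓ a c ≠ lorQuotSep ℓ b c ∨ lorQuotSep ℓ c a ≠ lorQuotSep ℓ c b) :=
  ⟨(lorSetoid ℓ).iseqv,
    fun _ _ _ _ hx hy => congrArg₂ (lorQuotSep ℓ) (Quotient.sound hx) (Quotient.sound hy),
    h.quotient, pointDistinguishing_lorQuotSep ℓ⟩

end
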